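/- The group Sym_{M,n,r}(k) with operation L ⊕ N = L + N - 2(NML) + 2(LMN) is a central extension: the set of elements of Sym_{M,n,r}(k) whose off-diagonal blocks vanish (i.e. only the bottom-right r×r symmetric block L₂ is nonzero) forms a central subgroup isomorphic to (Sym_r(k), +), and the quotient by this subgroup is isomorphic to the additive group of (n-r)×r matrices over k. -/

import Mathlib

/-- The group `Sym_{M,n,r}(k)` in block coordinates `(L₁, L₂)`:
`(L₁,L₂) ⊕ (N₁,N₂) = (L₁+N₁, L₂+N₂-2N₁ᵀM'L₁+2L₁ᵀM'N₁)`. -/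
def blockOplus {k : Type*} [Field k] {m r : ℕ} (M' : Matrix (Fin m) (Fin m) k)
    (x y : Matrix (Fin m) (Fin r) k × Matrix (Fin r) (Fin r) k) :
    Matrix (Fin m) (Fin r) k × Matrix (Fin r) (Fin r) k :=
  (x.1 + y.1,
    x.2 + y.2 - (2 : k) • (y.1.transpose * M' * x.1) + (2 : k) • (x.1.transpose * M' * y.1))

/-! The cross terms of `blockOplus` are bilinear in the first blocks, so they vanish as soon as
one factor has first block `0`; against such an element the operation is plain addition. -/

section BlockOplus

variable {k : Type*} [Field k] {m r : ℕ} (M' : Matrix (Fin m) (Fin m) k)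

@[simp]
theorem fst_blockOplus (x y : Matrix (Fin m) (Fin r) k × Matrix (Fin r) (Fin r) k) :
    (blockOplus M' x y).1 = x.1 + y.1 :=
  rfl

theorem blockOplus_zero_left (S : Matrix (Fin r) (Fin r) k)
    (x : Matrix (Fin m) (Fin r) k × Matrix (Fin r) (Fin r) k) :
    blockOplus M' (0, S) x = (x.1, S + x.2) := by
  simp [blockOplus]

theorem blockOplus_zero_right (S : Matrix (Fin r) (Fin r) k)
    (x : Matrix (Fin m) (Fin r) k × Matrix (Fin r) (Fin r) k) :
    blockOplus M' x (0, S) = (x.1, x.2 + S) := by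
  simp [blockOplus]

theorem blockOplus_zero_comm (S : Matrix (Fin r) (Fin r) k)
    (x : Matrix (Fin m) (Fin r) k × Matrix (Fin r) (Fin r) k) :
    blockOplus M' (0, S) x = blockOplus M' x (0, S) := by
  rw [blockOplus_zero_left, blockOplus_zero_right, add_comm]

theorem blockOplus_zero_zero (S S' : Matrix (Fin r) (Fin r) k) :
    blockOplus M' ((0 : Matrix (Fin m) (Fin r) k), S) (0, S') = (0, S + S') :=
  blockOplus_zero_left M' S _

end BlockOplus

theorem statement2_general {k : Type*} [Field k] (m r : ℕ)
    (M' : Matrix (Fin m) (Fin m) k) :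
    -- the subgroup of elements `(0, S)` is central
    (∀ S : Matrix (Fin r) (Fin r) k, S.transpose = S →
      ∀ x : Matrix (Fin m) (Fin r) k × Matrix (Fin r) (Fin r) k,
        blockOplus M' (0, S) x = blockOplus M' x (0, S)) ∧
    -- `S ↦ (0, S)` is an injective group homomorphism from `(Sym_r(k), +)`
    (∀ S S' : Matrix (Fin r) (Fin r) k, S.transpose = S → S'.transpose = S' →
      blockOplus M' (0, S) (0, S') = (0, S + S')) ∧
    (∀ S S' : Matrix (Fin r) (Fin r) k,
      ((0, S) : Matrix (Fin m) (Fin r) k × Matrix (Fin r) (Fin r) k) = (0, S') → S = S') ∧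
    -- the first projection is a surjective group homomorphism onto `(M_{(n-r)×r}(k), +)`
    (∀ x y : Matrix (Fin m) (Fin r) k × Matrix (Fin r) (Fin r) k,
      (blockOplus M' x y).1 = x.1 + y.1) ∧
    (∀ L₁ : Matrix (Fin m) (Fin r) k,
      ∃ x : Matrix (Fin m) (Fin r) k × Matrix (Fin r) (Fin r) k, x.2.transpose = x.2 ∧ x.1 = L₁) ∧
    -- its kernel is exactly the central subgroup above
    (∀ x : Matrix (Fin m) (Fin r) k × Matrix (Fin r) (Fin r) k,
      x.1 = 0 ↔ ∃ S : Matrix (Fin r) (Fin r) k, x = (0, S)) :=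
  ⟨fun S _ x => blockOplus_zero_comm M' S x,
    fun S S' _ _ => blockOplus_zero_zero M' S S',
    fun _ _ h => (Prod.mk.inj h).2,
    fun x y => fst_blockOplus M' x y,
    fun L₁ => ⟨(L₁, 0), Matrix.transpose_zero, rfl⟩,
    fun x => ⟨fun h => ⟨x.2, Prod.ext h rfl⟩, fun ⟨_, hx⟩ => hx ▸ rfl⟩⟩

/-- `Sym_{M,n,r}(k)` is a central extension: the elements with vanishing
off-diagonal blocks form a central subgroup isomorphic to `(Sym_r(k), +)`, and the
quotient by this subgroup is isomorphic to the additive group `M_{(n-r)×r}(k)`. -/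
theorem statement2 {k : Type*} [Field k] (hchar : (2 : k) ≠ 0) (m r : ℕ)
    (M' : Matrix (Fin m) (Fin m) k) (hskew : M'.transpose = -M') :
    -- the subgroup of elements `(0, S)` is central
    (∀ S : Matrix (Fin r) (Fin r) k, S.transpose = S →
      ∀ x : Matrix (Fin m) (Fin r) k × Matrix (Fin r) (Fin r) k,
        blockOplus M' (0, S) x = blockOplus M' x (0, S)) ∧
    -- `S ↦ (0, S)` is an injective group homomorphism from `(Sym_r(k), +)`
    (∀ S S' : Matrix (Fin r) (Fin r) k, S.transpose = S → S'.transpose = S' →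
      blockOplus M' (0, S) (0, S') = (0, S + S')) ∧
    (∀ S S' : Matrix (Fin r) (Fin r) k,
      ((0, S) : Matrix (Fin m) (Fin r) k × Matrix (Fin r) (Fin r) k) = (0, S') → S = S') ∧
    -- the first projection is a surjective group homomorphism onto `(M_{(n-r)×r}(k), +)`
    (∀ x y : Matrix (Fin m) (Fin r) k × Matrix (Fin r) (Fin r) k,
      (blockOplus M' x y).1 = x.1 + y.1) ∧
    (∀ L₁ : Matrix (Fin m) (Fin r) k,
      ∃ x : Matrix (Fin m) (Fin r) k × Matrix (Fin r) (Fin r) k, x.2.transpose = x.2 ∧ x.1 = L₁) ∧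
    -- its kernel is exactly the central subgroup above
    (∀ x : Matrix (Fin m) (Fin r) k × Matrix (Fin r) (Fin r) k,
      x.1 = 0 ↔ ∃ S : Matrix (Fin r) (Fin r) k, x = (0, S)) :=
  statement2_general m r M'
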